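/- There are constants c > 0 and C > 0 such that the following holds. Let G be a finite abelian group, let ε > 0, let B ⊆ G be a regular Bohr set of rank d ≥ 1, let A ⊆ B be nonempty with relative density α = μ_B(A), let B' ⊆ B_{cεα/d} be a regular Bohr set, and let C' ⊆ B' be nonempty with relative density γ = μ_{B'}(C'). Then at least one of the following holds: (1) |⟨μ_A ∗ μ_A, μ_{C'}⟩ − μ(B)^{−1}| ≤ ε·μ(B)^{−1}; or (2) there is an integer p with 1 ≤ p ≤ C·log(2/γ) such that ‖(μ_A − μ_B) ∗ (μ_A − μ_B)‖_{p(μ_{B'})} ≥ (ε/2)·μ(B)^{−1}. -/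

import Mathlib

open scoped Classical Pointwise

noncomputable section

variable {G : Type*} [AddCommGroup G] [Fintype G]

/-- The average `𝔼_{x ∈ G} f(x)`. -/
def gavg (f : G → ℝ) : ℝ := (∑ x, f x) / (Fintype.card G : ℝ)

/-- The inner product `⟨f, g⟩ = 𝔼_{x ∈ G} f(x) g(x)`. -/
def ginner (f g : G → ℝ) : ℝ := gavg (fun x => f x * g x)

/-- The convolution `f ∗ g (x) = 𝔼_y f(y) g(x - y)`. -/
def gconv (f g : G → ℝ) : G → ℝ := fun x => gavg (fun y => f y * g (x - y))

/-- The difference convolution `f ∘ g (x) = 𝔼_y f(y) g(x + y)`. -/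
def gdconv (f g : G → ℝ) : G → ℝ := fun x => gavg (fun y => f y * g (x + y))

/-- The `L^p(ν)` norm `(𝔼_x ν(x) |f(x)|^p)^(1/p)`. -/
def gnorm (p : ℝ) (ν : G → ℝ) (f : G → ℝ) : ℝ := (gavg fun x => ν x * |f x| ^ p) ^ (1 / p)

/-- The `L^∞` norm `max_x |f(x)|`. -/
def gsup (f : G → ℝ) : ℝ := ⨆ x, |f x|

/-- The normalised indicator `μ_A = (|G|/|A|) · 1_A`. -/
def gmu (A : Finset G) : G → ℝ := fun x => if x ∈ A then (Fintype.card G : ℝ) / (A.card : ℝ) else 0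

/-- The indicator function `1_A`. -/
def gind (A : Finset G) : G → ℝ := fun x => if x ∈ A then 1 else 0

/-- The density `|A|/|G|` of `A` in `G`. -/
def gdens (A : Finset G) : ℝ := (A.card : ℝ) / (Fintype.card G : ℝ)

/-- The relative density `μ_B(A) = |A ∩ B| / |B|`. -/
def grel (B A : Finset G) : ℝ := ((A ∩ B).card : ℝ) / (B.card : ℝ)

/-- `f` has nonnegative (real) Fourier transform: for every character `γ` of `G`,
`f̂(γ) = 𝔼_x f(x) γ(-x)` is a nonnegative real number. -/
def FourierNonneg (f : G → ℝ) : Prop :=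
  ∀ γ : AddChar G ℂ, ∃ r : ℝ, 0 ≤ r ∧
    (∑ x, (f x : ℂ) * γ (-x)) / (Fintype.card G : ℂ) = (r : ℂ)

/-- A Bohr set, given by a frequency set of characters together with a width function. -/
structure BohrSet (H : Type*) [AddCommGroup H] where
  freq : Finset (AddChar H ℂ)
  width : AddChar H ℂ → ℝ

namespace BohrSet

variable {H : Type*} [AddCommGroup H]

/-- The rank of a Bohr set: the size of its frequency set. -/
def rank (B : BohrSet H) : ℕ := B.freq.card

/-- The dilate `B_ρ` of a Bohr set: the width is dilated by `ρ`. -/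
def dilate (B : BohrSet H) (ρ : ℝ) : BohrSet H := ⟨B.freq, fun γ => ρ * B.width γ⟩

/-- The underlying set `{x : |1 - γ(x)| ≤ ν(γ) ∀ γ ∈ Γ}` of a Bohr set. -/
def toFinset [Fintype H] (B : BohrSet H) : Finset H :=
  Finset.univ.filter fun x => ∀ γ ∈ B.freq, ‖1 - γ x‖ ≤ B.width γ

/-- A Bohr set of rank `d` is regular if `(1 - 100d|κ|)|B| ≤ |B_{1+κ}| ≤ (1 + 100d|κ|)|B|`
for all `|κ| ≤ 1/(100d)`. -/
def IsRegular [Fintype H] (B : BohrSet H) : Prop :=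
  ∀ κ : ℝ, |κ| ≤ 1 / (100 * B.rank) →
    (1 - 100 * B.rank * |κ|) * (B.toFinset.card : ℝ) ≤ ((B.dilate (1 + κ)).toFinset.card : ℝ) ∧
    ((B.dilate (1 + κ)).toFinset.card : ℝ) ≤ (1 + 100 * B.rank * |κ|) * (B.toFinset.card : ℝ)

end BohrSet

/-- The dilate `k·B = {kb : b ∈ B}` of a finite set. -/
def kdil (k : ℕ) (B : Finset G) : Finset G := B.image fun x => k • x
section Aux

variable {G : Type*} [AddCommGroup G] [Fintype G]

set_option linter.unusedSectionVars false

private lemma gmu_nonneg (A : Finset G) (x : G) : 0 ≤ gmu A x := by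
  unfold gmu; split <;> positivity

private lemma sum_gmu {A : Finset G} (hA : A.Nonempty) : ∑ x, gmu A x = (Fintype.card G : ℝ) := by
  unfold gmu
  rw [← Finset.sum_filter, Finset.filter_univ_mem, Finset.sum_const, nsmul_eq_mul]
  have h0 : (A.card : ℝ) ≠ 0 := Nat.cast_ne_zero.mpr (Finset.card_ne_zero_of_mem hA.choose_spec)
  field_simp

private lemma sum_conv_swap (u v : G → ℝ) (x : G) :
    ∑ y, u y * v (x - y) = ∑ y, v y * u (x - y) :=
  Fintype.sum_equiv (Equiv.subLeft x) _ _ (fun y => by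
    simp only [Equiv.subLeft_apply, sub_sub_cancel]; ring)

private lemma ginner_gconv_sub_sub (a b w : G → ℝ) :
    ginner (gconv (fun y => a y - b y) (fun y => a y - b y)) w =
      ginner (gconv a a) w - 2 * ginner (gconv b a) w + ginner (gconv b b) w := by
  unfold ginner gconv gavg
  have key : ∀ x : G, (∑ y, (a y - b y) * (a (x - y) - b (x - y))) =
      (∑ y, a y * a (x - y)) - 2 * (∑ y, b y * a (x - y)) + (∑ y, b y * b (x - y)) := by
    intro x
    have e : ∀ y : G, (a y - b y) * (a (x - y) - b (x - y)) =
        a y * a (x - y) - a y * b (x - y) - b y * a (x - y) + b y * b (x - y) := fun y => by ring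
    simp only [e]
    rw [Finset.sum_add_distrib, Finset.sum_sub_distrib, Finset.sum_sub_distrib,
      sum_conv_swap a b x]
    ring
  simp only [key]
  have e2 : ∀ x : G,
      ((∑ y, a y * a (x - y)) - 2 * (∑ y, b y * a (x - y)) + (∑ y, b y * b (x - y))) /
          (Fintype.card G : ℝ) * w x
        = (∑ y, a y * a (x - y)) / (Fintype.card G : ℝ) * w x
          - 2 * ((∑ y, b y * a (x - y)) / (Fintype.card G : ℝ) * w x)
          + (∑ y, b y * b (x - y)) / (Fintype.card G : ℝ) * w x := fun x => by ring
  simp only [e2]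
  rw [Finset.sum_add_distrib, Finset.sum_sub_distrib, ← Finset.mul_sum]
  ring

private lemma ginner_gconv_mu (Y X W : Finset G) (hY : Y.Nonempty) (hX : X.Nonempty)
    (hW : W.Nonempty) :
    ginner (gconv (gmu Y) (gmu X)) (gmu W) =
      (Fintype.card G : ℝ) / ((Y.card : ℝ) * (X.card : ℝ) * (W.card : ℝ)) *
        ∑ c ∈ W, ((X.filter fun x' => c - x' ∈ Y).card : ℝ) := by
  have hn : (0:ℝ) < Fintype.card G := by exact_mod_cast Fintype.card_pos
  have hYc : (0:ℝ) < Y.card := by exact_mod_cast hY.card_pos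
  have hXc : (0:ℝ) < X.card := by exact_mod_cast hX.card_pos
  have hWc : (0:ℝ) < W.card := by exact_mod_cast hW.card_pos
  have inner : ∀ x : G, ∑ y, gmu Y y * gmu X (x - y)
      = (Fintype.card G : ℝ)^2 / ((Y.card : ℝ) * (X.card : ℝ)) *
          ((X.filter fun x' => x - x' ∈ Y).card : ℝ) := by
    intro x
    rw [sum_conv_swap]
    have e : ∀ y : G, gmu X y * gmu Y (x - y) =
        if y ∈ X ∧ x - y ∈ Y then
          (Fintype.card G : ℝ) / (X.card : ℝ) * ((Fintype.card G : ℝ) / (Y.card : ℝ)) else 0 := by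
      intro y
      unfold gmu
      by_cases h1 : y ∈ X <;> by_cases h2 : x - y ∈ Y <;> simp [h1, h2]
    simp only [e]
    rw [← Finset.sum_filter, Finset.sum_const, nsmul_eq_mul]
    have hfe : (Finset.univ.filter fun y => y ∈ X ∧ x - y ∈ Y)
        = X.filter fun x' => x - x' ∈ Y := by
      ext y; simp
    rw [hfe]
    field_simp
  unfold ginner gconv gavg
  simp only [inner]
  have e3 : ∀ x : G,
      (Fintype.card G : ℝ)^2 / ((Y.card : ℝ) * (X.card : ℝ)) *
          ((X.filter fun x' => x - x' ∈ Y).card : ℝ) / (Fintype.card G : ℝ) * gmu W x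
      = if x ∈ W then
          (Fintype.card G : ℝ)^2 / ((Y.card : ℝ) * (X.card : ℝ)) *
            ((X.filter fun x' => x - x' ∈ Y).card : ℝ) / (Fintype.card G : ℝ) *
            ((Fintype.card G : ℝ) / (W.card : ℝ)) else 0 := by
    intro x
    unfold gmu
    by_cases h : x ∈ W <;> simp [h]
  simp only [e3]
  rw [← Finset.sum_filter, Finset.filter_univ_mem, Finset.sum_div, Finset.mul_sum]
  refine Finset.sum_congr rfl fun c _ => ?_
  field_simp

private lemma mem_dilate_sub {B : BohrSet G} {ρ : ℝ} {c x : G}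
    (hc : c ∈ (B.dilate ρ).toFinset) (hx : x ∈ B.toFinset) :
    c - x ∈ (B.dilate (1 + ρ)).toFinset := by
  simp only [BohrSet.toFinset, Finset.mem_filter, Finset.mem_univ, true_and] at hc hx ⊢
  simp only [BohrSet.toFinset, BohrSet.dilate, Finset.mem_filter, Finset.mem_univ,
    true_and] at hc hx ⊢
  intro γ hγ
  have h1 := hc γ hγ
  have h2 := hx γ hγ
  have habsc : ‖γ c‖ = 1 := by
    exact AddChar.norm_apply γ c
  have habsx : ‖γ x‖ = 1 := by
    exact AddChar.norm_apply γ x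
  have hsub : γ (c - x) = γ c * γ (-x) := by
    rw [← AddChar.map_add_eq_mul, sub_eq_add_neg]
  have hone : γ x * γ (-x) = 1 := by
    rw [← AddChar.map_add_eq_mul, add_neg_cancel, AddChar.map_zero_eq_one]
  have hxinv : ‖1 - γ (-x)‖ = ‖1 - γ x‖ := by
    calc ‖1 - γ (-x)‖ = ‖γ x‖ * ‖1 - γ (-x)‖ := by
          rw [habsx, one_mul]
      _ = ‖γ x * (1 - γ (-x))‖ := (norm_mul _ _).symm
      _ = ‖γ x - 1‖ := by rw [mul_sub, mul_one, hone]
      _ = ‖1 - γ x‖ := norm_sub_rev _ _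
  calc ‖1 - γ (c - x)‖
      = ‖(1 - γ c) + γ c * (1 - γ (-x))‖ := by rw [hsub]; congr 1; ring
    _ ≤ ‖1 - γ c‖ + ‖γ c * (1 - γ (-x))‖ := norm_add_le _ _
    _ = ‖1 - γ c‖ + ‖1 - γ x‖ := by
        rw [norm_mul, habsc, one_mul, hxinv]
    _ ≤ ρ * B.width γ + B.width γ := add_le_add h1 h2
    _ = (1 + ρ) * B.width γ := by ring

private lemma mem_dilate_of_mem {B : BohrSet G} {ρ : ℝ} (hρ : 0 ≤ ρ)
    (hwidth : ∀ γ ∈ B.freq, 0 ≤ B.width γ) {x : G} (hx : x ∈ B.toFinset) :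
    x ∈ (B.dilate (1 + ρ)).toFinset := by
  simp only [BohrSet.toFinset, Finset.mem_filter, Finset.mem_univ, true_and] at hx ⊢
  simp only [BohrSet.toFinset, BohrSet.dilate, Finset.mem_filter, Finset.mem_univ,
    true_and] at hx ⊢
  intro γ hγ
  have := hx γ hγ
  nlinarith [hwidth γ hγ]

end Aux
set_option maxHeartbeats 2000000

/-- **Hölder lifting relative to Bohr sets (Proposition 14).** There are `c, C > 0` such
that: for a finite abelian group `G`, `ε > 0`, a regular Bohr set `B` of rank `d ≥ 1`, a
nonempty `A ⊆ B` of relative density `α`, a regular Bohr set `B' ⊆ B_{cεα/d}` and a nonempty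
`C' ⊆ B'` of relative density `γ`, either `|⟨μ_A ∗ μ_A, μ_{C'}⟩ - μ(B)⁻¹| ≤ ε·μ(B)⁻¹`, or
`‖(μ_A - μ_B) ∗ (μ_A - μ_B)‖_{p(μ_{B'})} ≥ (ε/2)·μ(B)⁻¹` for some `1 ≤ p ≤ C·log(2/γ)`. -/
theorem statement18 :
    ∃ c > (0 : ℝ), ∃ C > (0 : ℝ), ∀ (G : Type) [AddCommGroup G] [Fintype G], ∀ ε : ℝ, 0 < ε →
      ∀ B : BohrSet G, B.IsRegular → 1 ≤ B.rank →
      ∀ A : Finset G, A.Nonempty → A ⊆ B.toFinset →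
      ∀ B' : BohrSet G, B'.IsRegular →
        B'.toFinset ⊆ (B.dilate (c * ε * grel B.toFinset A / (B.rank : ℝ))).toFinset →
      ∀ C' : Finset G, C'.Nonempty → C' ⊆ B'.toFinset →
      |ginner (gconv (gmu A) (gmu A)) (gmu C') - (gdens B.toFinset)⁻¹| ≤
          ε * (gdens B.toFinset)⁻¹ ∨
      ∃ p : ℕ, 1 ≤ p ∧ (p : ℝ) ≤ C * Real.log (2 / grel B'.toFinset C') ∧
        (ε / 2) * (gdens B.toFinset)⁻¹ ≤
          gnorm (p : ℝ) (gmu B'.toFinset)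
            (gconv (fun y => gmu A y - gmu B.toFinset y)
              (fun y => gmu A y - gmu B.toFinset y)) := by
  refine ⟨1/800, by norm_num, 10, by norm_num, ?_⟩
  intro G _ _ ε hε B hBreg hd A hAne hAB B' hB'reg hB'sub C' hC'ne hC'B'
  have hn : (0:ℝ) < Fintype.card G := by exact_mod_cast Fintype.card_pos
  have hBsne : B.toFinset.Nonempty := ⟨hAne.choose, hAB hAne.choose_spec⟩
  have hB'ne : B'.toFinset.Nonempty := ⟨hC'ne.choose, hC'B' hC'ne.choose_spec⟩
  have haA : (0:ℝ) < A.card := by exact_mod_cast hAne.card_pos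
  have hbB : (0:ℝ) < B.toFinset.card := by exact_mod_cast hBsne.card_pos
  have hcC : (0:ℝ) < C'.card := by exact_mod_cast hC'ne.card_pos
  have hbB' : (0:ℝ) < B'.toFinset.card := by exact_mod_cast hB'ne.card_pos
  have hAsub : (A.card : ℝ) ≤ B.toFinset.card := by
    exact_mod_cast Finset.card_le_card hAB
  have hC'sub : (C'.card : ℝ) ≤ B'.toFinset.card := by
    exact_mod_cast Finset.card_le_card hC'B'
  have hαeq : grel B.toFinset A = (A.card : ℝ) / (B.toFinset.card : ℝ) := by
    unfold grel; rw [Finset.inter_eq_left.mpr hAB]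
  have hβ : (gdens B.toFinset)⁻¹ = (Fintype.card G : ℝ) / (B.toFinset.card : ℝ) := by
    unfold gdens; rw [inv_div]
  have hβpos : (0:ℝ) < (Fintype.card G : ℝ) / (B.toFinset.card : ℝ) := by positivity
  -- upper bound for the main inner product
  have hIformula := ginner_gconv_mu A A C' hAne hAne hC'ne
  have hI_nonneg : 0 ≤ ginner (gconv (gmu A) (gmu A)) (gmu C') := by
    rw [hIformula]
    refine mul_nonneg (by positivity) (Finset.sum_nonneg fun c _ => Nat.cast_nonneg _)
  have hI_up : ginner (gconv (gmu A) (gmu A)) (gmu C') ≤ (Fintype.card G : ℝ) / (A.card : ℝ) := by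
    rw [hIformula]
    have hsum : ∑ c ∈ C', ((A.filter fun x' => c - x' ∈ A).card : ℝ)
        ≤ (C'.card : ℝ) * A.card := by
      calc ∑ c ∈ C', ((A.filter fun x' => c - x' ∈ A).card : ℝ)
          ≤ ∑ _c ∈ C', (A.card : ℝ) :=
            Finset.sum_le_sum fun c _ => by exact_mod_cast Finset.card_filter_le _ _
        _ = (C'.card : ℝ) * A.card := by rw [Finset.sum_const, nsmul_eq_mul]
    calc (Fintype.card G : ℝ) / ((A.card : ℝ) * (A.card : ℝ) * (C'.card : ℝ)) *
          ∑ c ∈ C', ((A.filter fun x' => c - x' ∈ A).card : ℝ)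
        ≤ (Fintype.card G : ℝ) / ((A.card : ℝ) * (A.card : ℝ) * (C'.card : ℝ)) *
            ((C'.card : ℝ) * A.card) := by
          exact mul_le_mul_of_nonneg_left hsum (by positivity)
      _ = (Fintype.card G : ℝ) / (A.card : ℝ) := by field_simp
  by_cases h1 : |ginner (gconv (gmu A) (gmu A)) (gmu C') - (gdens B.toFinset)⁻¹| ≤
      ε * (gdens B.toFinset)⁻¹
  · exact Or.inl h1
  right
  push_neg at h1
  rw [hβ] at h1
  -- ε·α < 2, else the first alternative would hold
  have hεα2 : ε * (A.card : ℝ) < 2 * (B.toFinset.card : ℝ) := by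
    by_contra hcon
    push_neg at hcon
    have hmono : ε * (A.card : ℝ) ≤ ε * (B.toFinset.card : ℝ) :=
      mul_le_mul_of_nonneg_left hAsub hε.le
    have hε2 : 2 ≤ ε := le_of_mul_le_mul_right (by linarith) hbB
    have hkey : (Fintype.card G : ℝ) / (A.card : ℝ)
        ≤ ε * ((Fintype.card G : ℝ) / (B.toFinset.card : ℝ)) := by
      have hfact : (Fintype.card G : ℝ) * (B.toFinset.card : ℝ)
          ≤ (Fintype.card G : ℝ) * (ε * (A.card : ℝ)) :=
        mul_le_mul_of_nonneg_left (by linarith) hn.le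
      have h1' : (Fintype.card G : ℝ) / (A.card : ℝ)
          ≤ ε * (Fintype.card G : ℝ) / (B.toFinset.card : ℝ) := by
        rw [div_le_div_iff₀ haA hbB]
        linarith
      rwa [mul_div_assoc] at h1'
    have hfact2 : 1 * ((Fintype.card G : ℝ) / (B.toFinset.card : ℝ))
        ≤ ε * ((Fintype.card G : ℝ) / (B.toFinset.card : ℝ)) :=
      mul_le_mul_of_nonneg_right (by linarith) hβpos.le
    have habs : |ginner (gconv (gmu A) (gmu A)) (gmu C')
        - (Fintype.card G : ℝ) / (B.toFinset.card : ℝ)|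
        ≤ ε * ((Fintype.card G : ℝ) / (B.toFinset.card : ℝ)) := by
      rw [abs_le]
      constructor
      · linarith [hI_nonneg, hβpos]
      · linarith [hI_up, hkey, hβpos]
    linarith [h1, habs]
  -- the dilation parameter
  set ρr := 1/800 * ε * grel B.toFinset A / (B.rank : ℝ) with hρrdef
  have hdpos : (0:ℝ) < (B.rank : ℝ) := by
    have : (1:ℝ) ≤ (B.rank : ℝ) := by exact_mod_cast hd
    linarith
  have hρpos : 0 < ρr := by
    rw [hρrdef, hαeq]; positivity
  have h100 : 100 * (B.rank : ℝ) * ρr = ε * ((A.card : ℝ) / (B.toFinset.card : ℝ)) / 8 := by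
    rw [hρrdef, hαeq]; field_simp; ring
  have hεαlt : ε * ((A.card : ℝ) / (B.toFinset.card : ℝ)) < 2 := by
    rw [mul_div_assoc']
    rw [div_lt_iff₀ hbB]
    linarith
  have hρrle : |ρr| ≤ 1 / (100 * (B.rank : ℝ)) := by
    rw [abs_of_nonneg hρpos.le, le_div_iff₀ (by positivity)]
    linarith [h100, hεαlt]
  have hreg2 := (hBreg ρr hρrle).2
  rw [abs_of_nonneg hρpos.le] at hreg2
  -- width nonnegativity and B ⊆ B_{1+ρ}
  have hwidth : ∀ γ ∈ B.freq, 0 ≤ B.width γ := by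
    intro γ hγ
    have hmem := hAB hAne.choose_spec
    simp only [BohrSet.toFinset, Finset.mem_filter, Finset.mem_univ, true_and] at hmem
    exact le_trans (norm_nonneg _) (hmem γ hγ)
  have hBsub : B.toFinset ⊆ (B.dilate (1 + ρr)).toFinset :=
    fun x hx => mem_dilate_of_mem hρpos.le hwidth hx
  set K := (((B.dilate (1 + ρr)).toFinset.card : ℝ) - (B.toFinset.card : ℝ)) with hKdef
  have hK0 : 0 ≤ K := by
    rw [hKdef]
    have : (B.toFinset.card : ℝ) ≤ ((B.dilate (1 + ρr)).toFinset.card : ℝ) := by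
      exact_mod_cast Finset.card_le_card hBsub
    linarith
  have hαbB : (A.card : ℝ) / (B.toFinset.card : ℝ) * (B.toFinset.card : ℝ) = A.card :=
    div_mul_cancel₀ _ hbB.ne'
  have hKle : K ≤ ε * (A.card : ℝ) / 8 := by
    have hprod : 100 * (B.rank : ℝ) * ρr * (B.toFinset.card : ℝ) = ε * (A.card : ℝ) / 8 := by
      rw [h100]
      field_simp
    have hexp : (1 + 100 * (B.rank : ℝ) * ρr) * (B.toFinset.card : ℝ)
        = (B.toFinset.card : ℝ) + 100 * (B.rank : ℝ) * ρr * (B.toFinset.card : ℝ) := by ring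
    rw [hKdef]
    linarith [hreg2, hexp, hprod]
  -- counting lower bound
  have hNc : ∀ X : Finset G, X ⊆ B.toFinset → ∀ c ∈ C',
      (X.card : ℝ) - K ≤ ((X.filter fun x' => c - x' ∈ B.toFinset).card : ℝ) := by
    intro X hX c hc
    have hcB : c ∈ (B.dilate ρr).toFinset := hB'sub (hC'B' hc)
    have hinj : ((X.filter fun x' => ¬ (c - x' ∈ B.toFinset)).card)
        ≤ (((B.dilate (1 + ρr)).toFinset) \ B.toFinset).card := by
      apply Finset.card_le_card_of_injOn (fun x' => c - x')
      · intro x' hx'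
        rw [Finset.mem_coe, Finset.mem_filter] at hx'
        rw [Finset.mem_coe, Finset.mem_sdiff]
        exact ⟨mem_dilate_sub hcB (hX hx'.1), hx'.2⟩
      · intro a _ b _ hab
        exact sub_right_inj.mp hab
    have hsd : ((((B.dilate (1 + ρr)).toFinset) \ B.toFinset).card : ℝ) = K := by
      rw [Finset.card_sdiff_of_subset hBsub, Nat.cast_sub (Finset.card_le_card hBsub), hKdef]
    have hMle : ((X.filter fun x' => ¬ (c - x' ∈ B.toFinset)).card : ℝ) ≤ K := by
      rw [← hsd]; exact_mod_cast hinj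
    have hpart := Finset.card_filter_add_card_filter_not
      (s := X) (p := fun x' => c - x' ∈ B.toFinset)
    have hpart' := congrArg (Nat.cast : ℕ → ℝ) hpart
    push_cast at hpart'
    linarith
  -- bounds on the cross terms
  have hSbound : ∀ X : Finset G, X.Nonempty → X ⊆ B.toFinset →
      ginner (gconv (gmu B.toFinset) (gmu X)) (gmu C')
        ≤ (Fintype.card G : ℝ) / (B.toFinset.card : ℝ) ∧
      (Fintype.card G : ℝ) / (B.toFinset.card : ℝ) * (1 - K / (X.card : ℝ))
        ≤ ginner (gconv (gmu B.toFinset) (gmu X)) (gmu C') := by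
    intro X hXne hXsub
    have hXc : (0:ℝ) < X.card := by exact_mod_cast hXne.card_pos
    rw [ginner_gconv_mu B.toFinset X C' hBsne hXne hC'ne]
    constructor
    · calc (Fintype.card G : ℝ) / ((B.toFinset.card : ℝ) * (X.card : ℝ) * (C'.card : ℝ)) *
            ∑ c ∈ C', ((X.filter fun x' => c - x' ∈ B.toFinset).card : ℝ)
          ≤ (Fintype.card G : ℝ) / ((B.toFinset.card : ℝ) * (X.card : ℝ) * (C'.card : ℝ)) *
              ((C'.card : ℝ) * (X.card : ℝ)) := by
            refine mul_le_mul_of_nonneg_left ?_ (by positivity)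
            calc ∑ c ∈ C', ((X.filter fun x' => c - x' ∈ B.toFinset).card : ℝ)
                ≤ ∑ _c ∈ C', (X.card : ℝ) :=
                  Finset.sum_le_sum fun c _ => by exact_mod_cast Finset.card_filter_le _ _
              _ = (C'.card : ℝ) * (X.card : ℝ) := by rw [Finset.sum_const, nsmul_eq_mul]
        _ = (Fintype.card G : ℝ) / (B.toFinset.card : ℝ) := by field_simp
    · calc (Fintype.card G : ℝ) / (B.toFinset.card : ℝ) * (1 - K / (X.card : ℝ))
          = (Fintype.card G : ℝ) / ((B.toFinset.card : ℝ) * (X.card : ℝ) * (C'.card : ℝ)) *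
              ((C'.card : ℝ) * ((X.card : ℝ) - K)) := by field_simp
        _ ≤ (Fintype.card G : ℝ) / ((B.toFinset.card : ℝ) * (X.card : ℝ) * (C'.card : ℝ)) *
              ∑ c ∈ C', ((X.filter fun x' => c - x' ∈ B.toFinset).card : ℝ) := by
            refine mul_le_mul_of_nonneg_left ?_ (by positivity)
            calc (C'.card : ℝ) * ((X.card : ℝ) - K)
                = ∑ _c ∈ C', ((X.card : ℝ) - K) := by rw [Finset.sum_const, nsmul_eq_mul]
              _ ≤ ∑ c ∈ C', ((X.filter fun x' => c - x' ∈ B.toFinset).card : ℝ) :=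
                  Finset.sum_le_sum fun c hc => hNc X hXsub c hc
  obtain ⟨hSAup, hSAlo⟩ := hSbound A hAne hAB
  obtain ⟨hSBup, hSBlo⟩ := hSbound B.toFinset hBsne Finset.Subset.rfl
  have hKA : K / (A.card : ℝ) ≤ ε / 8 := by
    rw [div_le_iff₀ haA]; linarith
  have hKB : K / (B.toFinset.card : ℝ) ≤ ε / 8 := by
    rw [div_le_iff₀ hbB]
    have hfact : ε * (A.card : ℝ) ≤ ε * (B.toFinset.card : ℝ) :=
      mul_le_mul_of_nonneg_left hAsub hε.le
    linarith [hKle]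
  have hmulA := mul_le_mul_of_nonneg_left hKA hβpos.le
  have hmulB := mul_le_mul_of_nonneg_left hKB hβpos.le
  have hdecomp := ginner_gconv_sub_sub (gmu A) (gmu B.toFinset) (gmu C')
  -- the main term is large
  have hT : 5/8 * ε * ((Fintype.card G : ℝ) / (B.toFinset.card : ℝ)) ≤
      |ginner (gconv (fun y => gmu A y - gmu B.toFinset y)
        (fun y => gmu A y - gmu B.toFinset y)) (gmu C')| := by
    have hexpA : (Fintype.card G : ℝ) / (B.toFinset.card : ℝ) * (1 - K / (A.card : ℝ))
        = (Fintype.card G : ℝ) / (B.toFinset.card : ℝ)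
          - (Fintype.card G : ℝ) / (B.toFinset.card : ℝ) * (K / (A.card : ℝ)) := by ring
    have hexpB : (Fintype.card G : ℝ) / (B.toFinset.card : ℝ) * (1 - K / (B.toFinset.card : ℝ))
        = (Fintype.card G : ℝ) / (B.toFinset.card : ℝ)
          - (Fintype.card G : ℝ) / (B.toFinset.card : ℝ) * (K / (B.toFinset.card : ℝ)) := by ring
    have hεβ : 0 < ε * ((Fintype.card G : ℝ) / (B.toFinset.card : ℝ)) := mul_pos hε hβpos
    rcases lt_abs.mp h1 with h | h
    · refine le_trans ?_ (le_abs_self _)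
      rw [hdecomp]
      linarith [hSAup, hSAlo, hSBup, hSBlo, hmulA, hmulB, hβpos, hexpA, hexpB, hεβ, h]
    · refine le_trans ?_ (neg_le_abs _)
      rw [hdecomp]
      linarith [hSAup, hSAlo, hSBup, hSBlo, hmulA, hmulB, hβpos, hexpA, hexpB, hεβ, h]
  -- relative density of C' in B'
  have hγeq : grel B'.toFinset C' = (C'.card : ℝ) / (B'.toFinset.card : ℝ) := by
    unfold grel; rw [Finset.inter_eq_left.mpr hC'B']
  set γv := (C'.card : ℝ) / (B'.toFinset.card : ℝ) with hγdef
  have hγpos : 0 < γv := by positivity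
  have hγ1 : γv ≤ 1 := by rw [hγdef, div_le_one hbB']; exact hC'sub
  -- logarithm facts
  have hlog54 : (0:ℝ) < Real.log (5/4) := Real.log_pos (by norm_num)
  have hlog54' : (1/5:ℝ) ≤ Real.log (5/4) := by
    have h := Real.log_le_sub_one_of_pos (show (0:ℝ) < 4/5 by norm_num)
    have h2 : Real.log (4/5:ℝ) = - Real.log (5/4) := by
      rw [show (4/5:ℝ) = ((5/4:ℝ))⁻¹ by norm_num, Real.log_inv]
    rw [h2] at h
    linarith
  have hlog2' : (1/2:ℝ) ≤ Real.log 2 := by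
    have h := Real.log_le_sub_one_of_pos (show (0:ℝ) < 1/2 by norm_num)
    have h2 : Real.log (1/2:ℝ) = - Real.log 2 := by
      rw [show (1/2:ℝ) = ((2:ℝ))⁻¹ by norm_num, Real.log_inv]
    rw [h2] at h
    linarith
  have hL2 : Real.log 2 ≤ Real.log (2/γv) := by
    apply Real.log_le_log (by norm_num)
    rw [le_div_iff₀ hγpos]
    linarith [hγ1, hγpos]
  have hL0 : (0:ℝ) ≤ Real.log (2/γv) := by linarith
  -- the exponent
  set p := max 1 ⌈Real.log (2/γv) / Real.log (5/4)⌉₊ with hpdef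
  have hp1 : 1 ≤ p := le_max_left 1 _
  have hppos : (0:ℝ) < (p : ℝ) := by exact_mod_cast Nat.lt_of_lt_of_le Nat.zero_lt_one hp1
  have hpne : ((p : ℕ) : ℝ) ≠ 0 := hppos.ne'
  have hpub : (p : ℝ) ≤ 10 * Real.log (2/γv) := by
    have hceil : ((⌈Real.log (2/γv) / Real.log (5/4)⌉₊ : ℕ) : ℝ)
        ≤ Real.log (2/γv) / Real.log (5/4) + 1 :=
      (Nat.ceil_lt_add_one (by positivity)).le
    have hx5 : Real.log (2/γv) / Real.log (5/4) ≤ 5 * Real.log (2/γv) := by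
      rw [div_le_iff₀ hlog54]
      have hf := mul_le_mul_of_nonneg_left hlog54'
        (by linarith : (0:ℝ) ≤ 5 * Real.log (2/γv))
      linarith [hf]
    have hcast : (p : ℝ) = max (1:ℝ) ((⌈Real.log (2/γv) / Real.log (5/4)⌉₊ : ℕ) : ℝ) := by
      rw [hpdef]; push_cast; rfl
    rw [hcast]
    apply max_le <;> linarith
  have hplow : Real.log (2/γv) / Real.log (5/4) ≤ (p : ℝ) := by
    refine (Nat.le_ceil _).trans ?_
    exact_mod_cast Nat.cast_le.mpr (le_max_right 1 _)
  -- γ^(1/p) ≥ 4/5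
  have hγp : (4/5:ℝ)^(p : ℕ) ≤ γv := by
    have hploL : Real.log (2/γv) ≤ (p:ℝ) * Real.log (5/4) := by
      have := (div_le_iff₀ hlog54).mp hplow
      linarith
    have hlog1γ : Real.log (1/γv) ≤ (p:ℝ) * Real.log (5/4) := by
      refine le_trans (Real.log_le_log (by positivity) ?_) hploL
      gcongr
      norm_num
    have hQ : 1/γv ≤ (5/4:ℝ)^(p : ℕ) := by
      have h2 : Real.log (1/γv) ≤ Real.log ((5/4:ℝ)^(p : ℕ)) := by
        rw [Real.log_pow]; exact_mod_cast hlog1γ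
      exact (Real.log_le_log_iff (by positivity) (by positivity)).mp h2
    have hQpos : (0:ℝ) < (5/4:ℝ)^(p : ℕ) := by positivity
    rw [div_le_iff₀ hγpos] at hQ
    have h45eq : (4/5:ℝ)^(p : ℕ) = (((5/4:ℝ))^(p : ℕ))⁻¹ := by
      rw [← inv_pow]; norm_num
    rw [h45eq, inv_eq_one_div, div_le_iff₀ hQpos]
    linarith
  have h45 : (4/5:ℝ) ≤ γv ^ ((1:ℝ)/(p:ℝ)) := by
    have h := Real.rpow_le_rpow (by positivity) hγp
      (show (0:ℝ) ≤ 1/(p:ℝ) by positivity)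
    rwa [← Real.rpow_natCast (4/5:ℝ) p, ← Real.rpow_mul (by norm_num), mul_one_div,
      div_self hpne, Real.rpow_one] at h
  -- Hölder / Jensen step
  set g := gconv (fun y => gmu A y - gmu B.toFinset y)
      (fun y => gmu A y - gmu B.toFinset y) with hgdef
  set t := 5/8 * ε * ((Fintype.card G : ℝ) / (B.toFinset.card : ℝ)) with htdef
  have htpos : 0 < t := by rw [htdef]; positivity
  set M := (∑ x, gmu C' x * |g x|) / (Fintype.card G : ℝ) with hMdef
  have habsM : |ginner g (gmu C')| ≤ M := by
    unfold ginner gavg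
    rw [hMdef, abs_div, abs_of_nonneg hn.le]
    gcongr
    refine (Finset.abs_sum_le_sum_abs _ _).trans (le_of_eq ?_)
    refine Finset.sum_congr rfl fun x _ => ?_
    rw [abs_mul, abs_of_nonneg (gmu_nonneg _ _)]
    ring
  have hM : t ≤ M := le_trans hT habsM
  -- Jensen
  have hw1 : ∑ x : G, gmu C' x / (Fintype.card G : ℝ) = 1 := by
    rw [← Finset.sum_div, sum_gmu hC'ne, div_self hn.ne']
  have hJ := Real.pow_arith_mean_le_arith_mean_pow Finset.univ
    (fun x => gmu C' x / (Fintype.card G : ℝ)) (fun x => |g x|)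
    (fun x _ => div_nonneg (gmu_nonneg _ _) hn.le) hw1 (fun x _ => abs_nonneg _) p
  have e4 : ∀ x : G, gmu C' x / (Fintype.card G : ℝ) * |g x|
      = gmu C' x * |g x| / (Fintype.card G : ℝ) := fun x => by ring
  have e5 : ∀ x : G, gmu C' x / (Fintype.card G : ℝ) * |g x| ^ (p : ℕ)
      = gmu C' x * |g x| ^ (p : ℕ) / (Fintype.card G : ℝ) := fun x => by ring
  simp only [e4, e5, ← Finset.sum_div] at hJ
  -- pointwise comparison with μ_{B'}
  set V := (∑ x, gmu B'.toFinset x * |g x| ^ (p : ℕ)) / (Fintype.card G : ℝ) with hVdef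
  have hCV : (∑ x, gmu C' x * |g x| ^ (p : ℕ)) / (Fintype.card G : ℝ)
      ≤ ((B'.toFinset.card : ℝ) / (C'.card : ℝ)) * V := by
    have hpt : ∀ x : G, gmu C' x * |g x| ^ (p : ℕ)
        ≤ (B'.toFinset.card : ℝ) / (C'.card : ℝ) * (gmu B'.toFinset x * |g x| ^ (p : ℕ)) := by
      intro x
      by_cases hx : x ∈ C'
      · have hx' : x ∈ B'.toFinset := hC'B' hx
        unfold gmu
        rw [if_pos hx, if_pos hx']
        apply le_of_eq
        field_simp
      · unfold gmu
        rw [if_neg hx, zero_mul]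
        positivity
    rw [hVdef, ← mul_div_assoc, Finset.mul_sum]
    exact (div_le_div_iff_of_pos_right hn).mpr (Finset.sum_le_sum fun x _ => hpt x)
  have hVlow : γv * t ^ (p : ℕ) ≤ V := by
    have htp : t ^ (p : ℕ) ≤ M ^ (p : ℕ) := pow_le_pow_left₀ htpos.le hM p
    have hMp : M ^ (p : ℕ) ≤ ((B'.toFinset.card : ℝ) / (C'.card : ℝ)) * V := by
      rw [hMdef]
      exact le_trans hJ hCV
    have hchain : t ^ (p : ℕ) ≤ ((B'.toFinset.card : ℝ) / (C'.card : ℝ)) * V := le_trans htp hMp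
    have := mul_le_mul_of_nonneg_left hchain hγpos.le
    have heq : γv * (((B'.toFinset.card : ℝ) / (C'.card : ℝ)) * V) = V := by
      rw [hγdef]
      field_simp
    linarith
  -- conclude
  refine ⟨p, hp1, ?_, ?_⟩
  · rw [hγeq]; exact hpub
  · rw [hβ]
    have hgnorm : gnorm ((p : ℕ) : ℝ) (gmu B'.toFinset) g = V ^ ((1:ℝ)/((p : ℕ):ℝ)) := by
      unfold gnorm gavg
      rw [hVdef]
      simp only [Real.rpow_natCast]
    rw [hgnorm]
    calc (ε/2) * ((Fintype.card G : ℝ) / (B.toFinset.card : ℝ)) = 4/5 * t := by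
          rw [htdef]; ring
      _ ≤ γv ^ ((1:ℝ)/(p:ℝ)) * t := mul_le_mul_of_nonneg_right h45 htpos.le
      _ = (γv * t ^ (p : ℕ)) ^ ((1:ℝ)/(p:ℝ)) := by
          rw [Real.mul_rpow hγpos.le (by positivity), ← Real.rpow_natCast t p,
            ← Real.rpow_mul htpos.le, mul_one_div, div_self hpne, Real.rpow_one]
      _ ≤ V ^ ((1:ℝ)/(p:ℝ)) := Real.rpow_le_rpow (by positivity) hVlow (by positivity)
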